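/- arXiv:2007.04448 — 3 statements merged into one kernel-verified Lean document; each statement's English description precedes it below -/
import Mathlib

section
/- Let n ≥ 1, β₁, β₂ ∈ ℝ, and let γ : ℝⁿ → ℝⁿ be the rank vector defined by γ_j(s) = n⁻¹ Σ_{i=1}^n p_ij(s), where p_ij(s) = exp(u_ij(s)) / Σ_{k=1}^n exp(u_ik(s)) and u_ij(s) = β₁ s_j + β₂ (s_i − s_j)². Then γ is differentiable, and at every egalitarian point s = θ𝟙 (θ ∈ ℝ) its Jacobian matrix equals (β₁/n)(I − n⁻¹E). In particular, the Jacobian of γ at egalitarian points does not depend on β₂ or on θ. -/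
/-!
Each row `p_i·` is a softmax of the utilities `u_i·`, whose derivative is
`p_ij (du_ij − ∑_k p_ik du_ik)`. At an egalitarian point all utilities of a row coincide, so
`p_ik = 1/n`, and the proximity term `β₂ (s_i − s_j)²` vanishes to second order, so
`du_ij = β₁ ds_j`. Every row therefore has the same Jacobian `(β₁/n)(I − n⁻¹E)`, and so has
their average `γ`.
-/

open Finset Real

section Softmax

variable {ι E : Type*} [Fintype ι] [NormedAddCommGroup E] [NormedSpace ℝ E]
  {f : ι → E → ℝ} {f' : ι → E →L[ℝ] ℝ} {x : E}

theorem hasFDerivAt_exp_div_sum_exp (hf : ∀ k, HasFDerivAt (f k) (f' k) x) (j : ι) :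
    HasFDerivAt (fun y => exp (f j y) / ∑ k, exp (f k y))
      ((exp (f j x) / ∑ k, exp (f k x)) •
        (f' j - ∑ k, (exp (f k x) / ∑ k, exp (f k x)) • f' k)) x := by
  have hZ : ∑ k, exp (f k x) ≠ 0 := (sum_pos (fun k _ => exp_pos _) ⟨j, mem_univ j⟩).ne'
  have hsum := HasFDerivAt.fun_sum (u := univ) fun k _ => (hf k).exp
  have h := (hf j).exp.mul ((hasDerivAt_inv hZ).comp_hasFDerivAt x hsum)
  refine (h.congr_fderiv ?_).congr_of_eventuallyEq (.of_forall fun y => div_eq_mul_inv _ _)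
  simp only [div_eq_mul_inv, mul_smul]
  ext v
  simp only [add_apply, smul_apply, sub_apply, FunLike.coe_sum, Finset.sum_apply, smul_eq_mul,
    Function.comp_apply, mul_left_comm _ (∑ k, exp (f k x))⁻¹, ← mul_sum]
  field_simp
  ring

theorem differentiable_exp_div_sum_exp (hf : ∀ k, Differentiable ℝ (f k)) (j : ι) :
    Differentiable ℝ fun y => exp (f j y) / ∑ k, exp (f k y) := fun x =>
  (hasFDerivAt_exp_div_sum_exp (fun k => (hf k x).hasFDerivAt) j).differentiableAt

theorem hasFDerivAt_exp_div_sum_exp_of_forall_eq (hf : ∀ k, HasFDerivAt (f k) (f' k) x) (j : ι)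
    (hx : ∀ k, f k x = f j x) :
    HasFDerivAt (fun y => exp (f j y) / ∑ k, exp (f k y))
      ((Fintype.card ι : ℝ)⁻¹ • (f' j - (Fintype.card ι : ℝ)⁻¹ • ∑ k, f' k)) x := by
  have hp : ∀ k, exp (f k x) / ∑ k, exp (f k x) = (Fintype.card ι : ℝ)⁻¹ := fun k => by
    simp only [hx, sum_const, card_univ, nsmul_eq_mul]
    field_simp
  simpa only [hp, ← smul_sum] using hasFDerivAt_exp_div_sum_exp hf j

end Softmax

theorem hasFDerivAt_utility_of_eq {ι : Type*} [Fintype ι] (β₁ β₂ : ℝ) {s : ι → ℝ} {i j : ι}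
    (hs : s i = s j) :
    HasFDerivAt (fun s : ι → ℝ => β₁ * s j + β₂ * (s i - s j) ^ 2)
      (β₁ • ContinuousLinearMap.proj (R := ℝ) j) s := by
  have h := ((hasFDerivAt_apply (𝕜 := ℝ) j s).const_mul β₁).add
    ((((hasFDerivAt_apply (𝕜 := ℝ) i s).sub (hasFDerivAt_apply (𝕜 := ℝ) j s)).pow 2).const_mul β₂)
  refine h.congr_fderiv ?_
  simp [hs]

theorem hasFDerivAt_choiceProb_egalitarian {ι : Type*} [Fintype ι] (β₁ β₂ θ : ℝ) (i j : ι) :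
    HasFDerivAt
      (fun s : ι → ℝ => exp (β₁ * s j + β₂ * (s i - s j) ^ 2) /
        ∑ k, exp (β₁ * s k + β₂ * (s i - s k) ^ 2))
      ((β₁ / Fintype.card ι) • (ContinuousLinearMap.proj j -
        (Fintype.card ι : ℝ)⁻¹ • ∑ k, (ContinuousLinearMap.proj k : (ι → ℝ) →L[ℝ] ℝ)))
      (fun _ => θ) := by
  have h := hasFDerivAt_exp_div_sum_exp_of_forall_eq
    (f := fun k (s : ι → ℝ) => β₁ * s k + β₂ * (s i - s k) ^ 2) (x := fun _ => θ)
    (fun k => hasFDerivAt_utility_of_eq β₁ β₂ rfl) j (fun k => rfl)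
  refine h.congr_fderiv ?_
  rw [← smul_sum]
  module

theorem rank_jacobian_egalitarian_general (n : ℕ) (β₁ β₂ : ℝ)
    (u : (Fin n → ℝ) → Fin n → Fin n → ℝ)
    (hu : ∀ s i j, u s i j = β₁ * s j + β₂ * (s i - s j) ^ 2)
    (p : (Fin n → ℝ) → Fin n → Fin n → ℝ)
    (hp : ∀ s i j, p s i j = Real.exp (u s i j) / ∑ k, Real.exp (u s i k))
    (γ : (Fin n → ℝ) → Fin n → ℝ)
    (hγ : ∀ s j, γ s j = (n : ℝ)⁻¹ * ∑ i, p s i j) :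
    Differentiable ℝ γ ∧
      ∀ θ : ℝ, ∀ j l : Fin n,
        fderiv ℝ γ (fun _ => θ) (Pi.single l 1) j =
          (β₁ / n) * ((if j = l then (1 : ℝ) else 0) - (n : ℝ)⁻¹) := by
  obtain rfl : γ = fun s j => (n : ℝ)⁻¹ * ∑ i, exp (β₁ * s j + β₂ * (s i - s j) ^ 2) /
      ∑ k, exp (β₁ * s k + β₂ * (s i - s k) ^ 2) := by
    funext s j
    simp only [hγ, hp, hu]
  refine ⟨differentiable_pi.2 fun j => ?_, fun θ j l => ?_⟩
  · exact (Differentiable.fun_sum fun i _ => differentiable_exp_div_sum_exp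
      (f := fun k (s : Fin n → ℝ) => β₁ * s k + β₂ * (s i - s k) ^ 2)
      (fun k => by fun_prop) j).const_mul _
  · have hn : (n : ℝ) ≠ 0 := Nat.cast_ne_zero.2 j.pos.ne'
    have hD := hasFDerivAt_pi.2 fun j : Fin n => (HasFDerivAt.fun_sum (u := univ) fun i _ =>
      hasFDerivAt_choiceProb_egalitarian β₁ β₂ θ i j).const_mul (n : ℝ)⁻¹
    rw [hD.fderiv]
    simp [Pi.single_apply, hn]

/-- **Jacobian of the rank vector at egalitarian points.** For `n ≥ 1` and the rank vector
`γ_j(s) = n⁻¹ ∑_i p_ij(s)` induced by utilities `u_ij(s) = β₁ s_j + β₂ (s_i − s_j)²`,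
`γ` is differentiable, and at every egalitarian point `s = θ𝟙` its Jacobian matrix equals
`(β₁/n)(I − n⁻¹E)`, i.e. has entries `(β₁/n)(δ_{jl} − 1/n)`; in particular it does not
depend on `β₂` or `θ`. -/
theorem rank_jacobian_egalitarian (n : ℕ) (hn : 1 ≤ n) (β₁ β₂ : ℝ)
    (u : (Fin n → ℝ) → Fin n → Fin n → ℝ)
    (hu : ∀ s i j, u s i j = β₁ * s j + β₂ * (s i - s j) ^ 2)
    (p : (Fin n → ℝ) → Fin n → Fin n → ℝ)
    (hp : ∀ s i j, p s i j = Real.exp (u s i j) / ∑ k, Real.exp (u s i k))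
    (γ : (Fin n → ℝ) → Fin n → ℝ)
    (hγ : ∀ s j, γ s j = (n : ℝ)⁻¹ * ∑ i, p s i j) :
    Differentiable ℝ γ ∧
      ∀ θ : ℝ, ∀ j l : Fin n,
        fderiv ℝ γ (fun _ => θ) (Pi.single l 1) j =
          (β₁ / n) * ((if j = l then (1 : ℝ) else 0) - (n : ℝ)⁻¹) :=
  rank_jacobian_egalitarian_general n β₁ β₂ u hu p hp γ hγ
end

section
/- Let n ≥ 2 be a natural number, m > 0, and β ∈ ℝ. On the open set of entrywise-positive vectors s ∈ ℝⁿ define p_j(s) = exp(β√(s_j)) / Σ_{k=1}^n exp(β√(s_k)) and f(s)_j = m·p_j(s) − s_j. Then s₀ = (m/n)𝟙 satisfies f(s₀) = 0, f is differentiable at s₀ with Jacobian Df(s₀) = (mβ / (2n√(m/n)))(I − n⁻¹E) − I, and all eigenvalues of the symmetric matrix Df(s₀) are strictly negative if and only if β < 2√(n/m). -/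
/-!
The logit map `softmax` has Jacobian `diag σ - σ σᵀ`; at the egalitarian point `σ = n⁻¹ 𝟙`, so
by the chain rule through `s ↦ β √s` (derivative `β / (2 √(m/n))` in each coordinate) the drift
has Jacobian `c (I - n⁻¹ E) - I` with `c = m β / (2 n √(m/n))`. Since `E² = n E`, a matrix
`a I + b E` is annihilated by `(X - a)(X - a - n b)`, and the eigenvectors `e_i - e_j` and `𝟙` show
that its spectrum is exactly `{a, a + n b}`; here this is `{c - 1, -1}`, so stability means
`c < 1`, i.e. `β < 2 √(n/m)`.
-/

open Matrix

noncomputable def Matrix.mulVecCLM {ι : Type*} [Fintype ι] (M : Matrix ι ι ℝ) :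
    (ι → ℝ) →L[ℝ] ι → ℝ :=
  LinearMap.toContinuousLinearMap M.mulVecLin

@[simp]
lemma Matrix.mulVecCLM_apply {ι : Type*} [Fintype ι] (M : Matrix ι ι ℝ) (v : ι → ℝ) :
    M.mulVecCLM v = M *ᵥ v := rfl

section Spectrum

open Polynomial

variable {K ι : Type*} [Field K] [Fintype ι] [DecidableEq ι]

lemma mem_spectrum_of_mulVec_eq_smul {A : Matrix ι ι K} {μ : K} {v : ι → K} (hv : v ≠ 0)
    (h : A *ᵥ v = μ • v) : μ ∈ spectrum K A := by
  rw [← Matrix.spectrum_toLin', ← Module.End.hasEigenvalue_iff_mem_spectrum]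
  exact Module.End.hasEigenvalue_of_hasEigenvector
    ⟨Module.End.mem_eigenspace_iff.mpr (by simpa using h), hv⟩

lemma spectrum_smul_one_add_smul_allOnes [Nontrivial ι] (a b : K) :
    spectrum K (a • 1 + b • of fun _ _ => (1 : K) : Matrix ι ι K) =
      {a, a + Fintype.card ι * b} := by
  set E : Matrix ι ι K := of fun _ _ => 1
  set n : K := (Fintype.card ι : K)
  apply Set.Subset.antisymm
  · intro μ hμ
    set q : K[X] := (X - C a) * (X - C (a + n * b))
    have hE : E * E = n • E := by
      ext i j
      simp [E, n, Matrix.mul_apply]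
    have hq : aeval (a • 1 + b • E) q = 0 := by
      have : a • 1 + b • E - (a + n * b) • (1 : Matrix ι ι K) = b • (E - n • 1) := by module
      rw [map_mul, map_sub, map_sub, aeval_X, aeval_C, aeval_C, Algebra.algebraMap_eq_smul_one,
        Algebra.algebraMap_eq_smul_one, add_sub_cancel_left, this, smul_mul_smul_comm, mul_sub,
        hE, mul_smul_comm, mul_one, sub_self, smul_zero]
    have hroot := spectrum.subset_polynomial_aeval _ q ⟨μ, hμ, rfl⟩
    rw [hq, spectrum.zero_eq] at hroot
    simpa [q, sub_eq_zero] using hroot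
  · have hEv (v : ι → K) : E *ᵥ v = fun _ => ∑ i, v i := by
      ext
      simp [E, mulVec, dotProduct]
    obtain ⟨i, j, hij⟩ := exists_pair_ne ι
    rintro μ (rfl | rfl)
    · refine mem_spectrum_of_mulVec_eq_smul (v := Pi.single i 1 - Pi.single j 1)
        (sub_ne_zero.mpr fun h => by simpa [hij] using congrFun h i) ?_
      ext k
      simp [add_mulVec, smul_mulVec, hEv, Finset.sum_sub_distrib]
    · refine mem_spectrum_of_mulVec_eq_smul (v := fun _ => 1)
        (Function.ne_iff.mpr ⟨i, one_ne_zero⟩) ?_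
      ext k
      simp [add_mulVec, smul_mulVec, hEv, n, mul_comm]

end Spectrum

section Softmax

open Real

variable {ι : Type*} [Fintype ι]

noncomputable def softmax (x : ι → ℝ) (j : ι) : ℝ := exp (x j) / ∑ k, exp (x k)

lemma softmax_const (c : ℝ) : softmax (fun _ : ι => c) = fun _ => (Fintype.card ι : ℝ)⁻¹ := by
  ext j
  simp only [softmax, Finset.sum_const, Finset.card_univ, nsmul_eq_mul]
  exact div_mul_cancel_right₀ (exp_pos c).ne' _

variable [DecidableEq ι]

lemma hasFDerivAt_componentwise {g : ℝ → ℝ} {g' x : ι → ℝ}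
    (hg : ∀ j, HasDerivAt g (g' j) (x j)) :
    HasFDerivAt (fun s j => g (s j)) (diagonal g').mulVecCLM x := by
  refine hasFDerivAt_pi'.2 fun j =>
    ((hg j).comp_hasFDerivAt x (hasFDerivAt_apply j x)).congr_fderiv ?_
  ext v
  simp [mulVec_diagonal]

variable [Nonempty ι]

lemma hasFDerivAt_softmax (x : ι → ℝ) :
    HasFDerivAt softmax
      (diagonal (softmax x) - vecMulVec (softmax x) (softmax x)).mulVecCLM x := by
  have hS : ∑ k, exp (x k) ≠ 0 := (Finset.sum_pos (fun k _ => exp_pos _) Finset.univ_nonempty).ne'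
  have hexp (k : ι) := (hasFDerivAt_apply (𝕜 := ℝ) k x).exp
  refine hasFDerivAt_pi'.2 fun j => ((hexp j).mul ((hasDerivAt_inv hS).comp_hasFDerivAt x
    (.fun_sum fun k _ => hexp k))).congr_fderiv ?_
  ext v
  simp only [ContinuousLinearMap.comp_apply, ContinuousLinearMap.proj_apply, mulVecCLM_apply,
    sub_mulVec, vecMulVec_mulVec, mulVec_diagonal, Pi.sub_apply, Pi.smul_apply, softmax,
    dotProduct]
  simp [div_eq_mul_inv, Finset.mul_sum]
  field_simp
  ring

lemma hasFDerivAt_softmax_comp_const {g : ℝ → ℝ} {g' c : ℝ} (hg : HasDerivAt g g' c) :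
    HasFDerivAt (fun s => softmax fun j => g (s j))
      ((g' / Fintype.card ι) • (1 - (Fintype.card ι : ℝ)⁻¹ • of fun _ _ => 1) :
        Matrix ι ι ℝ).mulVecCLM
      (fun _ => c) := by
  have := HasFDerivAt.comp (fun _ : ι => c) (hasFDerivAt_softmax (fun _ : ι => g c))
    (hasFDerivAt_componentwise (g' := fun _ : ι => g') fun _ => hg)
  refine this.congr_fderiv ?_
  ext v j
  simp only [softmax_const, ContinuousLinearMap.comp_apply, mulVecCLM_apply, mulVec_mulVec]
  congr 2
  ext i k
  simp only [mul_diagonal, Matrix.sub_apply, diagonal_apply, vecMulVec_apply, Matrix.smul_apply,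
    one_apply, of_apply, smul_eq_mul]
  split_ifs <;> ring

end Softmax

lemma mul_div_two_mul_sqrt_div_lt_one_iff {m n β : ℝ} (hm : 0 < m) (hn : 0 < n) :
    m * β / (2 * n * √(m / n)) < 1 ↔ β < 2 * √(n / m) := by
  have hsq : n * √(m / n) = m * √(n / m) := by
    rw [Real.sqrt_div hm.le, Real.sqrt_div hn.le]
    field_simp
    rw [Real.sq_sqrt hm.le, Real.sq_sqrt hn.le]
  rw [mul_assoc, hsq, div_lt_one (by positivity), mul_left_comm, mul_lt_mul_iff_right₀ hm]

/-- **Root-Degree stability corollary of Theorem 1.** For `n ≥ 2`, `m > 0`, `β ∈ ℝ`, the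
Root-Degree model `p_j(s) = exp(β√s_j)/∑_k exp(β√s_k)`, `f(s)_j = m p_j(s) − s_j` (on
positive vectors) satisfies: `s₀ = (m/n)𝟙` is a root of `f`; `f` is differentiable at `s₀`
with Jacobian `Df(s₀) = (mβ/(2n√(m/n)))(I − n⁻¹E) − I`; and all eigenvalues of this
symmetric matrix are strictly negative iff `β < 2√(n/m)`. -/
theorem root_degree_stability (n : ℕ) (hn : 2 ≤ n) (m : ℝ) (hm : 0 < m) (β : ℝ)
    (p : (Fin n → ℝ) → Fin n → ℝ)
    (hp : ∀ s j, p s j = Real.exp (β * Real.sqrt (s j)) / ∑ k, Real.exp (β * Real.sqrt (s k)))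
    (f : (Fin n → ℝ) → Fin n → ℝ)
    (hf : ∀ s, f s = fun j => m * p s j - s j)
    (D : Matrix (Fin n) (Fin n) ℝ)
    (hD : ∀ j l, D j l = (m * β / (2 * n * Real.sqrt (m / n))) *
        ((if j = l then (1 : ℝ) else 0) - (n : ℝ)⁻¹) - (if j = l then (1 : ℝ) else 0)) :
    f (fun _ => m / n) = 0 ∧
      DifferentiableAt ℝ f (fun _ => m / n) ∧
      (∀ j l : Fin n, fderiv ℝ f (fun _ => m / n) (Pi.single l 1) j = D j l) ∧
      ((∀ μ ∈ spectrum ℝ D, μ < 0) ↔ β < 2 * Real.sqrt ((n : ℝ) / m)) := by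
  have : NeZero n := ⟨by omega⟩
  have : Nontrivial (Fin n) := Fin.nontrivial_iff_two_le.2 hn
  have hn0 : (0 : ℝ) < n := by positivity
  set c := m * β / (2 * n * √(m / n))
  set E : Matrix (Fin n) (Fin n) ℝ := of fun _ _ => 1
  have hf' : f = fun s => m • softmax (fun j => β * √(s j)) - s := by
    ext s j
    simp [hf, hp, softmax]
  have hD' : D = c • (1 - (n : ℝ)⁻¹ • E) - 1 := by
    ext j l
    simp [hD, E, one_apply]
  have hderiv : HasFDerivAt f D.mulVecCLM (fun _ => m / n) := by
    have hg := (Real.hasDerivAt_sqrt (div_pos hm hn0).ne').const_mul β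
    have hc : m * (β * (1 / (2 * √(m / n))) / n) = c := by
      simp only [c]
      ring
    rw [hf']
    refine (((hasFDerivAt_softmax_comp_const (ι := Fin n) hg).const_smul m).sub
      (hasFDerivAt_id _)).congr_fderiv ?_
    ext v j
    simp only [_root_.sub_apply, _root_.smul_apply, mulVecCLM_apply, ContinuousLinearMap.id_apply,
      Fintype.card_fin, hD', E, sub_mulVec, smul_mulVec, one_mulVec, smul_smul, hc]
  refine ⟨?_, hderiv.differentiableAt, fun j l => by simp [hderiv.fderiv], ?_⟩
  · ext j
    simp [hf', softmax_const, div_eq_mul_inv]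
  · have hneg : c - 1 + n * -(c / n) = -1 := by
      field_simp
      ring
    rw [hD', show c • (1 - (n : ℝ)⁻¹ • E) - 1 = (c - 1) • 1 + (-(c / n)) • E by module,
      spectrum_smul_one_add_smul_allOnes, Fintype.card_fin]
    simp only [Set.mem_insert_iff, Set.mem_singleton_iff, forall_eq_or_imp, forall_eq, hneg,
      sub_neg, ← mul_div_two_mul_sqrt_div_lt_one_iff hm hn0]
    exact and_iff_left (by norm_num)
end

section
/- Let n ≥ 1, let A be an n×n real matrix with nonnegative entries, and let α > 0. Then there exists a unique vector s ∈ ℝⁿ (the SpringRank vector of A) satisfying the linear system [diag(d^in) + diag(d^out) − (A + Aᵀ) + αI] s = d^in − d^out, where d^in = Aᵀ𝟙 and d^out = A𝟙. -/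
open Matrix

/-- **Existence and uniqueness of the SpringRank vector.** For `n ≥ 1`, a nonnegative
`n×n` matrix `A`, and `α > 0`, there is a unique `s ∈ ℝⁿ` with
`[diag(d^in) + diag(d^out) − (A + Aᵀ) + αI] s = d^in − d^out`,
where `d^in = Aᵀ𝟙` and `d^out = A𝟙`. -/
theorem springrank_exists_unique (n : ℕ) (hn : 1 ≤ n)
    (A : Matrix (Fin n) (Fin n) ℝ) (hA : ∀ i j, 0 ≤ A i j) (α : ℝ) (hα : 0 < α)
    (din dout : Fin n → ℝ)
    (hdin : din = Aᵀ *ᵥ (fun _ => 1)) (hdout : dout = A *ᵥ (fun _ => 1)) :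
    ∃! s : Fin n → ℝ,
      (Matrix.diagonal din + Matrix.diagonal dout - (A + Aᵀ)
        + α • (1 : Matrix (Fin n) (Fin n) ℝ)) *ᵥ s = din - dout := by
  set M : Matrix (Fin n) (Fin n) ℝ :=
    Matrix.diagonal din + Matrix.diagonal dout - (A + Aᵀ)
      + α • (1 : Matrix (Fin n) (Fin n) ℝ) with hM
  -- Key quadratic-form identity: xᵀ M x = ∑ᵢⱼ Aᵢⱼ (xᵢ - xⱼ)² + α ∑ᵢ xᵢ².
  have key : ∀ x : Fin n → ℝ, x ⬝ᵥ (M *ᵥ x) =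
      (∑ i, ∑ j, A i j * (x i - x j) ^ 2) + α * ∑ i, (x i) ^ 2 := by
    intro x
    have hMx : x ⬝ᵥ (M *ᵥ x) = ∑ i, ∑ j, x i * M i j * x j := by
      simp [dotProduct, Matrix.mulVec, Finset.mul_sum, mul_assoc]
    rw [hMx]
    have hterm : ∀ i j, x i * M i j * x j =
        (if j = i then (din i + dout i + α) * x i ^ 2 else 0)
          - (A i j + A j i) * (x i * x j) := by
      intro i j
      by_cases h : j = i
      · subst h; simp [hM, Matrix.diagonal_apply, Matrix.one_apply]; ring
      · have h' : ¬ i = j := fun h' => h h'.symm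
        simp [hM, Matrix.diagonal_apply, Matrix.one_apply, h, h']; ring
    simp only [hterm, Finset.sum_sub_distrib, Finset.sum_ite_eq', Finset.mem_univ,
      if_true]
    have hdin' : ∀ i, din i = ∑ j, A j i := by
      intro i; simp [hdin, Matrix.mulVec, dotProduct]
    have hdout' : ∀ i, dout i = ∑ j, A i j := by
      intro i; simp [hdout, Matrix.mulVec, dotProduct]
    have e1 : ∑ i, (din i + dout i + α) * x i ^ 2
        = (∑ i, ∑ j, (A j i * x i ^ 2 + A i j * x i ^ 2)) + α * ∑ i, x i ^ 2 := by
      rw [Finset.mul_sum, ← Finset.sum_add_distrib]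
      refine Finset.sum_congr rfl fun i _ => ?_
      rw [hdin' i, hdout' i, ← Finset.sum_add_distrib, add_mul, Finset.sum_mul]
      simp only [add_mul]
    rw [e1]
    have s1 : ∑ i, ∑ j, A j i * x i ^ 2 = ∑ i, ∑ j, A i j * x j ^ 2 :=
      Finset.sum_comm
    have s2 : ∑ i, ∑ j, A j i * (x i * x j) = ∑ i, ∑ j, A i j * (x i * x j) := by
      rw [Finset.sum_comm]
      exact Finset.sum_congr rfl fun i _ => Finset.sum_congr rfl fun j _ => by ring
    have e3 : ∑ i, ∑ j, (A i j + A j i) * (x i * x j)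
        = ∑ i, ∑ j, A i j * (x i * x j) + ∑ i, ∑ j, A j i * (x i * x j) := by
      simp only [add_mul, Finset.sum_add_distrib]
    have e4 : ∑ i, ∑ j, (A j i * x i ^ 2 + A i j * x i ^ 2)
        = ∑ i, ∑ j, A j i * x i ^ 2 + ∑ i, ∑ j, A i j * x i ^ 2 := by
      simp only [Finset.sum_add_distrib]
    have e5 : ∑ i, ∑ j, A i j * (x i - x j) ^ 2
        = (∑ i, ∑ j, A i j * x j ^ 2 + ∑ i, ∑ j, A i j * x i ^ 2)
          - 2 * ∑ i, ∑ j, A i j * (x i * x j) := by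
      rw [← Finset.sum_add_distrib, Finset.mul_sum, ← Finset.sum_sub_distrib]
      refine Finset.sum_congr rfl fun i _ => ?_
      rw [← Finset.sum_add_distrib, Finset.mul_sum, ← Finset.sum_sub_distrib]
      exact Finset.sum_congr rfl fun j _ => by ring
    rw [e3, e4, s1, s2, e5]
    ring
  -- Injectivity of M.mulVec
  have h0 : ∀ x : Fin n → ℝ, M *ᵥ x = 0 → x = 0 := by
    intro x hx
    have hk := key x
    rw [hx, dotProduct_zero] at hk
    have h1 : 0 ≤ ∑ i, ∑ j, A i j * (x i - x j) ^ 2 :=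
      Finset.sum_nonneg fun i _ => Finset.sum_nonneg fun j _ =>
        mul_nonneg (hA i j) (sq_nonneg _)
    have h2 : ∀ i ∈ Finset.univ, (0 : ℝ) ≤ x i ^ 2 := fun i _ => sq_nonneg _
    have hsum : ∑ i, x i ^ 2 = 0 := by
      have h3 : 0 ≤ ∑ i, x i ^ 2 := Finset.sum_nonneg h2
      nlinarith
    funext i
    have := (Finset.sum_eq_zero_iff_of_nonneg h2).mp hsum i (Finset.mem_univ i)
    exact pow_eq_zero_iff (by norm_num) |>.mp this
  have hinj : Function.Injective M.mulVec := by
    have : Function.Injective M.mulVecLin := by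
      rw [← LinearMap.ker_eq_bot, LinearMap.ker_eq_bot']
      intro x hx
      exact h0 x hx
    simpa [← Matrix.coe_mulVecLin] using this
  have hU : IsUnit M := Matrix.mulVec_injective_iff_isUnit.mp hinj
  obtain ⟨s, hs⟩ := Matrix.mulVec_surjective_iff_isUnit.mpr hU (din - dout)
  exact ⟨s, hs, fun y hy => hinj (hy.trans hs.symm)⟩
end
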